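/- Consider the multi-parametric quadratic program: minimize over ũ ∈ ℝ^m the objective ũᵀ F ũ + xᵀ G ũ subject to C_c ũ ≤ T x + c_c, where F ∈ ℝ^{m×m} is symmetric positive definite, G ∈ ℝ^{n_x×m}, C_c ∈ ℝ^{q×m}, T ∈ ℝ^{q×n_x}, c_c ∈ ℝ^q, and the parameter is x ∈ ℝ^{n_x}. Let X_N = {x : ∃ ũ with C_c ũ ≤ T x + c_c} be the feasibility region. Then for every x ∈ X_N the program has a unique minimizer ũ*(x), and the map x ↦ ũ*(x) is a continuous piecewise affine function on X_N: there exist finitely many polyhedra R_1, …, R_{n_r} with pairwise disjoint interiors whose union is X_N, matrices K_i and vectors g_i, such that ũ*(x) = K_i x + g_i for all x ∈ R_i. -/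

import Mathlib

open Finset Matrix

/-- The affine map `x ↦ W x + b`. -/
def affineMapVec {m n : ℕ} (W : Matrix (Fin m) (Fin n) ℝ) (b : Fin m → ℝ)
    (x : Fin n → ℝ) : Fin m → ℝ :=
  fun i => (∑ j, W i j * x j) + b i

/-- Componentwise rectifier (ReLU). -/
def reluVec {n : ℕ} (v : Fin n → ℝ) : Fin n → ℝ := fun i => max 0 (v i)

/-- Parameters θ of a feed-forward ReLU network with `L ≥ 1` hidden layers of width `M`,
input dimension `nx` and output dimension `nu`:  the first hidden layer `(W1, b1)`,
the `L - 1` remaining hidden layers `(W l, b l)`, and the output layer `(Wout, bout)`. -/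
structure ReLUNetParams (nx nu M L : ℕ) where
  W1 : Matrix (Fin M) (Fin nx) ℝ
  b1 : Fin M → ℝ
  W : Fin (L - 1) → Matrix (Fin M) (Fin M) ℝ
  b : Fin (L - 1) → Fin M → ℝ
  Wout : Matrix (Fin nu) (Fin M) ℝ
  bout : Fin nu → ℝ

/-- The function `N(·; θ, M, L) = f_{L+1} ∘ g_L ∘ f_L ∘ ⋯ ∘ g_1 ∘ f_1` computed by the
ReLU network with parameters `θ`. -/
def ReLUNetParams.eval {nx nu M L : ℕ} (p : ReLUNetParams nx nu M L)
    (x : Fin nx → ℝ) : Fin nu → ℝ :=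
  affineMapVec p.Wout p.bout <|
    (List.finRange (L - 1)).foldl
      (fun ξ l => reluVec (affineMapVec (p.W l) (p.b l) ξ))
      (reluVec (affineMapVec p.W1 p.b1 x))

/-- A polyhedron `{x | Z x ≤ z}`. -/
def IsPolyhedron {n : ℕ} (S : Set (Fin n → ℝ)) : Prop :=
  ∃ (m : ℕ) (Z : Matrix (Fin m) (Fin n) ℝ) (z : Fin m → ℝ),
    S = {x | ∀ i, (∑ j, Z i j * x j) ≤ z i}

/-- `f` is piecewise affine on `D`: finitely many polyhedra with pairwise disjoint
interiors whose union is `D`, with `f` affine on each. -/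
def IsPWAOn {n m : ℕ} (D : Set (Fin n → ℝ)) (f : (Fin n → ℝ) → Fin m → ℝ) : Prop :=
  ∃ (r : ℕ) (R : Fin r → Set (Fin n → ℝ))
    (K : Fin r → Matrix (Fin m) (Fin n) ℝ) (g : Fin r → Fin m → ℝ),
    (∀ i, IsPolyhedron (R i)) ∧
    (∀ i j, i ≠ j → interior (R i) ∩ interior (R j) = ∅) ∧
    (⋃ i, R i) = D ∧
    (∀ i, ∀ x ∈ R i, f x = affineMapVec (K i) (g i) x)

/-- Scalar-valued piecewise affine function on `D`. -/
def IsPWAOnScalar {n : ℕ} (D : Set (Fin n → ℝ)) (f : (Fin n → ℝ) → ℝ) : Prop :=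
  ∃ (r : ℕ) (R : Fin r → Set (Fin n → ℝ)) (a : Fin r → Fin n → ℝ) (c : Fin r → ℝ),
    (∀ i, IsPolyhedron (R i)) ∧
    (∀ i j, i ≠ j → interior (R i) ∩ interior (R j) = ∅) ∧
    (⋃ i, R i) = D ∧
    (∀ i, ∀ x ∈ R i, f x = (∑ j, a i j * x j) + c i)

/-- `f` agrees with some affine function on the set `S`. -/
def AffineOnSet {n m : ℕ} (f : (Fin n → ℝ) → Fin m → ℝ) (S : Set (Fin n → ℝ)) : Prop :=
  ∃ (A : Matrix (Fin m) (Fin n) ℝ) (b : Fin m → ℝ), ∀ x ∈ S, f x = affineMapVec A b x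

/-- A linear region of `f`: a nonempty open connected set on which `f` is affine,
maximal with this property. -/
def IsLinearRegion {n m : ℕ} (f : (Fin n → ℝ) → Fin m → ℝ) (S : Set (Fin n → ℝ)) : Prop :=
  S.Nonempty ∧ IsOpen S ∧ IsConnected S ∧ AffineOnSet f S ∧
    ∀ S', IsOpen S' → IsConnected S' → S ⊂ S' → ¬ AffineOnSet f S'

/-- Maximum of a nonempty finite family of reals. -/
noncomputable def finMax {N : ℕ} (hN : 0 < N) (g : Fin N → ℝ) : ℝ :=
  Finset.univ.sup' (Finset.univ_nonempty_iff.mpr (Fin.pos_iff_nonempty.mp hN)) g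

/-- The unit hypercube `[0,1]^n`. -/
def unitCube (n : ℕ) : Set (Fin n → ℝ) := {x | ∀ i, 0 ≤ x i ∧ x i ≤ 1}

/-!
For a fixed parameter `x` the objective is strictly convex and coercive, so it has a unique
minimizer on the nonempty feasible polyhedron. At the minimizer Farkas' lemma provides KKT
multipliers, and Carathéodory's theorem for cones lets them be supported on an active set `B`
of linearly independent constraint rows. For such `B` the KKT system is a nonsingular linear
system whose right-hand side is affine in `x`, so its solution is affine in `x`, and the
critical region of `B` (where that solution is primal and dual feasible) is a polyhedron on
which the minimizer is affine. The finitely many critical regions are closed and cover the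
feasibility region, which gives continuity; cutting them along all their bounding hyperplanes
gives polyhedra with disjoint interiors.
-/

open Filter Topology

section Cones

lemma exists_nonneg_sum_insert_eq {R ι M : Type*} [Semiring R] [PartialOrder R]
    [AddCommMonoid M] [Module R M] [DecidableEq ι] {k : ι} {s : Finset ι} (hk : k ∉ s)
    (a : ι → M) {μ : ι → R} (hμ : ∀ i ∈ s, 0 ≤ μ i) {c : R} (hc : 0 ≤ c) :
    ∃ μ' : ι → R, (∀ i ∈ insert k s, 0 ≤ μ' i) ∧
      ∑ i ∈ insert k s, μ' i • a i = c • a k + ∑ i ∈ s, μ i • a i := by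
  have hupd : ∀ i ∈ s, Function.update μ k c i = μ i := fun i hi =>
    Function.update_of_ne (ne_of_mem_of_not_mem hi hk) _ _
  refine ⟨Function.update μ k c, ?_, ?_⟩
  · simpa [Finset.forall_mem_insert, hc] using fun i hi => (hupd i hi).symm ▸ hμ i hi
  · rw [Finset.sum_insert hk, Function.update_self, Finset.sum_congr rfl fun i hi => by
      rw [hupd i hi]]

variable {𝕜 : Type*} [Field 𝕜] [LinearOrder 𝕜] [IsStrictOrderedRing 𝕜] {ι M : Type*}
  [AddCommGroup M] [Module 𝕜 M]

theorem exists_nonneg_sum_smul_eq_of_dotProduct_nonneg {n : Type*} [Fintype n]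
    [DecidableEq ι] (s : Finset ι) (a : ι → n → 𝕜) (g : n → 𝕜)
    (h : ∀ d, (∀ i ∈ s, 0 ≤ a i ⬝ᵥ d) → 0 ≤ g ⬝ᵥ d) :
    ∃ μ : ι → 𝕜, (∀ i ∈ s, 0 ≤ μ i) ∧ g = ∑ i ∈ s, μ i • a i := by
  induction s using Finset.induction_on generalizing a g with
  | empty =>
    have hgg : g ⬝ᵥ g = 0 := le_antisymm (by simpa using h (-g) (by simp))
      (Finset.sum_nonneg fun i _ => mul_self_nonneg (g i))
    exact ⟨0, by simp, by simpa using hgg⟩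
  | insert k s hk ih =>
    by_cases hs : ∀ d, (∀ i ∈ s, 0 ≤ a i ⬝ᵥ d) → 0 ≤ g ⬝ᵥ d
    · obtain ⟨μ, hμ, rfl⟩ := ih a g hs
      obtain ⟨μ', hμ', hsum⟩ := exists_nonneg_sum_insert_eq hk a hμ le_rfl
      exact ⟨μ', hμ', by simp [hsum]⟩
    push Not at hs
    obtain ⟨d₀, hd₀, hgd₀⟩ := hs
    -- eliminate `a k` along a direction `d₀` that separates `g` from the cone of the others
    have hα : a k ⬝ᵥ d₀ < 0 := by
      by_contra! hα
      exact hgd₀.not_ge (h d₀ (Finset.forall_mem_insert _ _ _ |>.mpr ⟨hα, hd₀⟩))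
    set α := a k ⬝ᵥ d₀
    set proj : (n → 𝕜) → n → 𝕜 := fun v => v - (v ⬝ᵥ d₀ / α) • a k
    obtain ⟨μ, hμ, hg⟩ := ih (fun i => proj (a i)) (proj g) fun d hd => by
      set d' := d - (a k ⬝ᵥ d / α) • d₀
      have hproj : ∀ v, v ⬝ᵥ d' = proj v ⬝ᵥ d := fun v => by
        simp only [d', proj, dotProduct_sub, sub_dotProduct, dotProduct_smul, smul_dotProduct,
          smul_eq_mul]
        ring
      have hkd' : a k ⬝ᵥ d' = 0 := by
        rw [hproj]; simp [proj, α, hα.ne]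
      rw [← hproj]
      exact h d' (Finset.forall_mem_insert _ _ _ |>.mpr ⟨hkd'.ge, fun i hi => hproj (a i) ▸ hd i hi⟩)
    have hlk : 0 ≤ g ⬝ᵥ d₀ / α - ∑ i ∈ s, μ i * (a i ⬝ᵥ d₀ / α) := by
      have : ∑ i ∈ s, μ i * (a i ⬝ᵥ d₀ / α) ≤ 0 := Finset.sum_nonpos fun i hi =>
        mul_nonpos_of_nonneg_of_nonpos (hμ i hi) (div_nonpos_of_nonneg_of_nonpos (hd₀ i hi) hα.le)
      linarith [div_pos_of_neg_of_neg hgd₀ hα]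
    obtain ⟨μ', hμ', hsum⟩ := exists_nonneg_sum_insert_eq hk a hμ hlk
    refine ⟨μ', hμ', ?_⟩
    simp only [proj, smul_sub, Finset.sum_sub_distrib, smul_smul, ← Finset.sum_smul] at hg
    rw [hsum]
    linear_combination (norm := module) hg

theorem exists_linearIndepOn_nonneg_sum_smul_eq [DecidableEq ι] (a : ι → M) (s : Finset ι)
    (μ : ι → 𝕜) (hμ : ∀ i ∈ s, 0 ≤ μ i) :
    ∃ B ⊆ s, LinearIndepOn 𝕜 a B ∧
      ∃ ν : ι → 𝕜, (∀ i ∈ B, 0 ≤ ν i) ∧ ∑ i ∈ s, μ i • a i = ∑ i ∈ B, ν i • a i := by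
  induction s using Finset.strongInduction generalizing μ with
  | H s ih =>
    by_cases hind : LinearIndepOn 𝕜 a s
    · exact ⟨s, subset_rfl, hind, μ, hμ, rfl⟩
    -- move along a linear relation among the `a i` until some coefficient vanishes
    obtain ⟨c, hc, j, hjs, hcj⟩ : ∃ c : ι → 𝕜, ∑ i ∈ s, c i • a i = 0 ∧ ∃ j ∈ s, 0 < c j := by
      obtain ⟨c, hc, j, hjs, hcj⟩ := not_linearIndepOn_finset_iff.mp hind
      rcases hcj.lt_or_gt with hneg | hpos
      · exact ⟨-c, by simp [hc], j, hjs, by simpa using hneg⟩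
      · exact ⟨c, hc, j, hjs, hpos⟩
    obtain ⟨i₀, hi₀, hmin⟩ := (s.filter (0 < c ·)).exists_min_image (fun i => μ i / c i)
      ⟨j, Finset.mem_filter.mpr ⟨hjs, hcj⟩⟩
    obtain ⟨hi₀s, hci₀⟩ := Finset.mem_filter.mp hi₀
    set θ := μ i₀ / c i₀
    have hθ : 0 ≤ θ := div_nonneg (hμ i₀ hi₀s) hci₀.le
    have hnonneg : ∀ i ∈ s, 0 ≤ μ i - θ * c i := fun i hi => by
      rcases le_or_gt (c i) 0 with hci | hci
      · nlinarith [hμ i hi]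
      · have := hmin i (Finset.mem_filter.mpr ⟨hi, hci⟩)
        rw [le_div_iff₀ hci] at this
        linarith
    have hzero : μ i₀ - θ * c i₀ = 0 := by simp [θ, hci₀.ne']
    have hsum : ∑ i ∈ s, μ i • a i = ∑ i ∈ s.erase i₀, (μ i - θ * c i) • a i := by
      rw [Finset.sum_erase _ (by simp [hzero])]
      simp only [sub_smul, mul_smul, Finset.sum_sub_distrib, ← Finset.smul_sum, hc, smul_zero,
        sub_zero]
    obtain ⟨B, hB, hind, ν, hν, hνsum⟩ := ih _ (Finset.erase_ssubset hi₀s) _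
      fun i hi => hnonneg i (Finset.mem_of_mem_erase hi)
    exact ⟨B, hB.trans (Finset.erase_subset _ _), hind, ν, hν, hsum.trans hνsum⟩

end Cones

section Polyhedra

lemma isClosed_setOf_mulVec_le {ι m : Type*} [Fintype m] (A : Matrix ι m ℝ) (b : ι → ℝ) :
    IsClosed {u | A *ᵥ u ≤ b} :=
  isClosed_le (Continuous.matrix_mulVec continuous_const continuous_id) continuous_const

lemma convex_setOf_mulVec_le {ι m : Type*} [Fintype m] (A : Matrix ι m ℝ) (b : ι → ℝ) :
    Convex ℝ {u | A *ᵥ u ≤ b} :=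
  convex_halfSpace_le (mulVecLin A).isLinear b

variable {n : ℕ}

lemma isPolyhedron_setOf_mulVec_le {κ : Type*} [Fintype κ] (Z : Matrix κ (Fin n) ℝ)
    (z : κ → ℝ) : IsPolyhedron {x | Z *ᵥ x ≤ z} := by
  let e := (Fintype.equivFin κ).symm
  refine ⟨Fintype.card κ, Z.submatrix e id, z ∘ e, ?_⟩
  ext x
  exact e.forall_congr_right.symm

lemma isPolyhedron_setOf_mulVec_add_le {κ : Type*} [Fintype κ] (P Q : Matrix κ (Fin n) ℝ)
    (p q : κ → ℝ) : IsPolyhedron {x | P *ᵥ x + p ≤ Q *ᵥ x + q} := by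
  convert isPolyhedron_setOf_mulVec_le (P - Q) (q - p) using 1
  ext x
  rw [Set.mem_ofPred, Set.mem_ofPred, sub_mulVec, sub_le_sub_iff, add_comm q]

lemma IsPolyhedron.inter {S S' : Set (Fin n → ℝ)} (hS : IsPolyhedron S)
    (hS' : IsPolyhedron S') : IsPolyhedron (S ∩ S') := by
  obtain ⟨m, Z, z, rfl⟩ := hS
  obtain ⟨m', Z', z', rfl⟩ := hS'
  convert isPolyhedron_setOf_mulVec_le (fromRows Z Z') (Sum.elim z z') using 1
  ext x
  simp [fromRows_mulVec, Pi.le_def, Sum.forall, mulVec, dotProduct]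

lemma IsPolyhedron.isClosed {S : Set (Fin n → ℝ)} (hS : IsPolyhedron S) : IsClosed S := by
  obtain ⟨m, Z, z, rfl⟩ := hS
  exact isClosed_setOf_mulVec_le Z z

lemma IsPolyhedron.exists_eq_setOf_dotProduct_le {S : Set (Fin n → ℝ)} (hS : IsPolyhedron S) :
    ∃ (m : ℕ) (a : Fin m → Fin n → ℝ) (c : Fin m → ℝ),
      S = {x | ∀ i, a i ⬝ᵥ x ≤ c i} ∧ ∀ i, a i = 0 → c i ≠ 0 := by
  classical
  obtain ⟨m, Z, z, rfl⟩ := hS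
  refine ⟨m, fun i => Z i, fun i => if Z i = 0 ∧ z i = 0 then 1 else z i, ?_, fun i hi => ?_⟩
  · ext x
    refine forall_congr' fun i => ?_
    dsimp only
    split_ifs with h
    · simp [h.1, h.2, dotProduct]
    · rfl
  · dsimp only at hi ⊢
    split_ifs with h
    · exact one_ne_zero
    · exact fun hz => h ⟨hi, hz⟩

end Polyhedra

section Refinement

lemma eq_zero_of_nonempty_interior_setOf_dotProduct_eq {ι : Type*} [Fintype ι] {a : ι → ℝ}
    {c : ℝ} (h : (interior {x | a ⬝ᵥ x = c}).Nonempty) : a = 0 := by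
  obtain ⟨y, hy⟩ := h
  have hline : ∀ᶠ t in 𝓝 (0 : ℝ), a ⬝ᵥ (y + t • a) = c :=
    (Continuous.tendsto' (by fun_prop) 0 y (by simp)).eventually (mem_interior_iff_mem_nhds.mp hy)
  obtain ⟨t, ht, ht0⟩ := ((hline.filter_mono nhdsWithin_le_nhds).and
    (self_mem_nhdsWithin : {t : ℝ | t ≠ 0} ∈ 𝓝[≠] 0)).exists
  have hy' : y ∈ {x | a ⬝ᵥ x = c} := interior_subset hy
  rw [dotProduct_add, dotProduct_smul, hy'.out, smul_eq_mul, add_eq_left] at ht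
  exact dotProduct_self_eq_zero.mp ((mul_eq_zero.mp ht).resolve_left ht0)

variable {n : ℕ} {K : Type*} (a : K → Fin n → ℝ) (c : K → ℝ)

def signCell (S : Finset K) : Set (Fin n → ℝ) :=
  {x | (∀ l ∈ S, a l ⬝ᵥ x ≤ c l) ∧ ∀ l ∉ S, c l ≤ a l ⬝ᵥ x}

lemma isPolyhedron_signCell [Fintype K] (S : Finset K) : IsPolyhedron (signCell a c S) := by
  classical
  convert isPolyhedron_setOf_mulVec_le (Matrix.of fun l => if l ∈ S then a l else -a l)
    (fun l => if l ∈ S then c l else -c l) using 1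
  ext x
  simp only [signCell, Set.mem_ofPred, Pi.le_def, mulVec, of_apply]
  refine ⟨fun ⟨hS, hSc⟩ l => ?_, fun h => ⟨fun l hl => ?_, fun l hl => ?_⟩⟩
  · split_ifs with hl
    · exact hS l hl
    · simpa [dotProduct] using hSc l hl
  · simpa [hl] using h l
  · simpa [hl, dotProduct] using h l

lemma mem_signCell_filter [Fintype K] [DecidableEq K] (x : Fin n → ℝ) :
    x ∈ signCell a c (Finset.univ.filter fun l => a l ⬝ᵥ x ≤ c l) :=
  ⟨fun l hl => (Finset.mem_filter.mp hl).2, fun l hl => le_of_not_ge (by simpa using hl)⟩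

variable {a c}

lemma interior_signCell_inter_eq_empty (hac : ∀ l, a l = 0 → c l ≠ 0) {S T : Finset K}
    (hST : S ≠ T) : interior (signCell a c S) ∩ interior (signCell a c T) = ∅ := by
  wlog h : ∃ l ∈ S, l ∉ T generalizing S T
  · rw [Set.inter_comm]
    refine this hST.symm ?_
    by_contra! h'
    exact hST (Finset.ext fun l => ⟨fun hl => by_contra fun hlT => h ⟨l, hl, hlT⟩, h' l⟩)
  obtain ⟨l, hlS, hlT⟩ := h
  rw [← interior_inter, Set.eq_empty_iff_forall_notMem]
  intro x hx
  have hsub : signCell a c S ∩ signCell a c T ⊆ {x | a l ⬝ᵥ x = c l} := fun y hy =>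
    le_antisymm (hy.1.1 l hlS) (hy.2.2 l hlT)
  have hal := eq_zero_of_nonempty_interior_setOf_dotProduct_eq ⟨x, interior_mono hsub hx⟩
  exact hac l hal (by simpa [hal, eq_comm] using hsub (interior_subset hx))

theorem exists_refinement_of_isPolyhedron {κ : Type*} [Fintype κ] {R : κ → Set (Fin n → ℝ)}
    (hR : ∀ j, IsPolyhedron (R j)) :
    ∃ (r : ℕ) (P : Fin r → Set (Fin n → ℝ)) (sel : Fin r → κ), (∀ i, IsPolyhedron (P i)) ∧
      (∀ i i', i ≠ i' → interior (P i) ∩ interior (P i') = ∅) ∧ (⋃ i, P i) = (⋃ j, R j) ∧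
      ∀ i, P i ⊆ R (sel i) := by
  classical
  choose m a c hR hac using fun j => (hR j).exists_eq_setOf_dotProduct_le
  -- cut space along every hyperplane bounding some `R j`; keep the cells inside some `R j`
  let a' : (Σ j, Fin (m j)) → Fin n → ℝ := fun l => a l.1 l.2
  let c' : (Σ j, Fin (m j)) → ℝ := fun l => c l.1 l.2
  let Good := {S : Finset (Σ j, Fin (m j)) // ∃ j, ∀ l, ⟨j, l⟩ ∈ S}
  have hsub : ∀ S : Good, signCell a' c' S.1 ⊆ R S.2.choose := fun S x hx => by
    rw [hR]
    exact fun l => hx.1 _ (S.2.choose_spec l)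
  let e := (Fintype.equivFin Good).symm
  refine ⟨Fintype.card Good, fun i => signCell a' c' (e i).1, fun i => (e i).2.choose,
    fun i => isPolyhedron_signCell a' c' _, fun i i' hii' => ?_, ?_, fun i => hsub (e i)⟩
  · have hac' : ∀ l, a' l = 0 → c' l ≠ 0 := fun l => hac l.1 l.2
    exact interior_signCell_inter_eq_empty hac' fun h => hii' (e.injective (Subtype.ext h))
  · refine subset_antisymm (Set.iUnion_subset fun i => (hsub (e i)).trans
      (Set.subset_iUnion _ _)) (Set.iUnion_subset fun j x hx => ?_)
    rw [hR] at hx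
    let S : Good := ⟨Finset.univ.filter fun l => a' l ⬝ᵥ x ≤ c' l, j, fun l => by simpa using hx l⟩
    exact Set.mem_iUnion.mpr ⟨e.symm S, by simpa using mem_signCell_filter a' c' x⟩

end Refinement

section QuadraticProgram

lemma Matrix.PosSemidef.isSymm {n : Type*} {F : Matrix n n ℝ} (hF : F.PosSemidef) : F.IsSymm :=
  isHermitian_iff_isSymm.mp hF.isHermitian

variable {n ι : Type*} [Fintype n] {F : Matrix n n ℝ} {w : n → ℝ}

def quadObj (F : Matrix n n ℝ) (w u : n → ℝ) : ℝ := u ⬝ᵥ (F *ᵥ u) + w ⬝ᵥ u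

lemma quadObj_continuous (F : Matrix n n ℝ) (w : n → ℝ) : Continuous (quadObj F w) := by
  unfold quadObj; fun_prop

lemma Matrix.IsSymm.dotProduct_mulVec_comm (hF : F.IsSymm) (u v : n → ℝ) :
    u ⬝ᵥ (F *ᵥ v) = v ⬝ᵥ (F *ᵥ u) := by
  rw [dotProduct_mulVec, ← mulVec_transpose, hF.eq, dotProduct_comm]

lemma quadObj_add (hF : F.IsSymm) (u d : n → ℝ) :
    quadObj F w (u + d) =
      quadObj F w u + (2 • (F *ᵥ u) + w) ⬝ᵥ d + d ⬝ᵥ (F *ᵥ d) := by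
  rw [add_dotProduct, smul_dotProduct, dotProduct_comm (F *ᵥ u), hF.dotProduct_mulVec_comm d u]
  simp only [quadObj, mulVec_add, dotProduct_add, add_dotProduct, hF.dotProduct_mulVec_comm d u]
  module

lemma Matrix.PosDef.exists_pos_mul_sq_norm_le (hF : F.PosDef) :
    ∃ c > 0, ∀ u : n → ℝ, c * ‖u‖ ^ 2 ≤ u ⬝ᵥ (F *ᵥ u) := by
  have hcont : Continuous fun u : n → ℝ => u ⬝ᵥ (F *ᵥ u) := by fun_prop
  obtain ⟨c, hc, hsphere⟩ : ∃ c > 0, ∀ v ∈ Metric.sphere (0 : n → ℝ) 1, c ≤ v ⬝ᵥ (F *ᵥ v) := by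
    rcases (Metric.sphere (0 : n → ℝ) 1).eq_empty_or_nonempty with h | h
    · exact ⟨1, one_pos, by simp [h]⟩
    obtain ⟨v₀, hv₀, hmin⟩ := (isCompact_sphere 0 1).exists_isMinOn h hcont.continuousOn
    have hv₀ne : v₀ ≠ 0 := by rintro rfl; simp at hv₀
    exact ⟨_, by simpa using hF.dotProduct_mulVec_pos hv₀ne, hmin⟩
  refine ⟨c, hc, fun u => ?_⟩
  rcases eq_or_ne u 0 with rfl | hu
  · simp
  have hnorm : 0 < ‖u‖ := norm_pos_iff.mpr hu
  have h := hsphere (‖u‖⁻¹ • u) (by simp [norm_smul, hnorm.ne'])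
  rw [mulVec_smul, dotProduct_smul, smul_dotProduct, smul_eq_mul, smul_eq_mul] at h
  calc c * ‖u‖ ^ 2 ≤ (‖u‖⁻¹ * (‖u‖⁻¹ * u ⬝ᵥ (F *ᵥ u))) * ‖u‖ ^ 2 := by gcongr
    _ = u ⬝ᵥ (F *ᵥ u) := by field_simp

lemma abs_dotProduct_le (w u : n → ℝ) : |w ⬝ᵥ u| ≤ (∑ i, |w i|) * ‖u‖ := by
  rw [Finset.sum_mul]
  refine (Finset.abs_sum_le_sum_abs _ _).trans (Finset.sum_le_sum fun i _ => ?_)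
  rw [abs_mul]
  exact mul_le_mul_of_nonneg_left (norm_le_pi_norm u i) (abs_nonneg _)

lemma tendsto_quadObj_cocompact (hF : F.PosDef) (w : n → ℝ) :
    Tendsto (quadObj F w) (cocompact (n → ℝ)) atTop := by
  obtain ⟨c, hc, hcoer⟩ := hF.exists_pos_mul_sq_norm_le
  have hlower : ∀ u, ‖u‖ * (c * ‖u‖ - ∑ i, |w i|) ≤ quadObj F w u := fun u => by
    unfold quadObj
    nlinarith [hcoer u, neg_abs_le (w ⬝ᵥ u), abs_dotProduct_le w u]
  refine tendsto_atTop_mono hlower ?_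
  exact tendsto_norm_cocompact_atTop.atTop_mul_atTop₀
    (tendsto_atTop_add_const_right _ _ (tendsto_norm_cocompact_atTop.const_mul_atTop hc))

lemma exists_isMinOn_quadObj (hF : F.PosDef) (w : n → ℝ) {K : Set (n → ℝ)} (hK : IsClosed K)
    (hne : K.Nonempty) : ∃ u ∈ K, IsMinOn (quadObj F w) K u := by
  obtain ⟨u₀, hu₀⟩ := hne
  refine (quadObj_continuous F w).continuousOn.exists_isMinOn' hK hu₀ ?_
  exact ((tendsto_quadObj_cocompact hF w).eventually_ge_atTop _).filter_mono inf_le_left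

lemma nonneg_of_eventually_nonneg_add_mul {α β : ℝ}
    (h : ∀ᶠ t in 𝓝[>] (0 : ℝ), 0 ≤ α + t * β) : 0 ≤ α := by
  have hlim : Tendsto (fun t : ℝ => α + t * β) (𝓝 0) (𝓝 α) :=
    Continuous.tendsto' (by fun_prop) 0 α (by simp)
  exact ge_of_tendsto (hlim.mono_left nhdsWithin_le_nhds) h

lemma grad_dotProduct_nonneg_of_isMinOn (hF : F.IsSymm) {K : Set (n → ℝ)} {u d : n → ℝ}
    (hmin : IsMinOn (quadObj F w) K u) (hd : ∀ᶠ t in 𝓝[>] (0 : ℝ), u + t • d ∈ K) :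
    0 ≤ (2 • (F *ᵥ u) + w) ⬝ᵥ d := by
  refine nonneg_of_eventually_nonneg_add_mul (β := d ⬝ᵥ (F *ᵥ d)) ?_
  filter_upwards [hd, self_mem_nhdsWithin] with t ht (htpos : 0 < t)
  have h : quadObj F w u ≤ quadObj F w (u + t • d) := hmin ht
  rw [quadObj_add hF, dotProduct_smul, mulVec_smul, dotProduct_smul,
    smul_dotProduct, smul_eq_mul, smul_eq_mul, smul_eq_mul] at h
  nlinarith

lemma quadObj_lt_of_isMinOn (hF : F.PosDef) {K : Set (n → ℝ)} (hK : Convex ℝ K) {u v : n → ℝ}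
    (hu : u ∈ K) (hmin : IsMinOn (quadObj F w) K u) (hv : v ∈ K) (hne : v ≠ u) :
    quadObj F w u < quadObj F w v := by
  have hgrad : 0 ≤ (2 • (F *ᵥ u) + w) ⬝ᵥ (v - u) :=
    grad_dotProduct_nonneg_of_isMinOn hF.posSemidef.isSymm hmin <|
      Filter.mem_of_superset (Ioc_mem_nhdsGT one_pos) fun t ht =>
        hK.add_smul_sub_mem hu hv ⟨ht.1.le, ht.2⟩
  have hpos : 0 < (v - u) ⬝ᵥ (F *ᵥ (v - u)) := by
    simpa using hF.dotProduct_mulVec_pos (sub_ne_zero.mpr hne)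
  have := quadObj_add (w := w) hF.posSemidef.isSymm u (v - u)
  rw [add_sub_cancel] at this
  linarith

noncomputable def quadArgmin (F : Matrix n n ℝ) (w : n → ℝ) (K : Set (n → ℝ)) : n → ℝ :=
  Classical.epsilon fun u => u ∈ K ∧ IsMinOn (quadObj F w) K u

lemma quadArgmin_spec (hF : F.PosDef) {K : Set (n → ℝ)} (hK : IsClosed K) (hne : K.Nonempty) :
    quadArgmin F w K ∈ K ∧ IsMinOn (quadObj F w) K (quadArgmin F w K) :=
  Classical.epsilon_spec (p := fun u => u ∈ K ∧ IsMinOn (quadObj F w) K u)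
    (exists_isMinOn_quadObj hF w hK hne)

lemma eq_quadArgmin (hF : F.PosDef) {K : Set (n → ℝ)} (hK : Convex ℝ K) (hKc : IsClosed K)
    {u : n → ℝ} (hu : u ∈ K) (hmin : IsMinOn (quadObj F w) K u) : u = quadArgmin F w K := by
  obtain ⟨hmem, hmin'⟩ := quadArgmin_spec hF hKc ⟨u, hu⟩
  by_contra hne
  exact (quadObj_lt_of_isMinOn hF hK hu hmin hmem (Ne.symm hne)).not_ge (hmin' hu)

variable {A : Matrix ι n ℝ} {b : ι → ℝ}

lemma eventually_mulVec_add_smul_le [Finite ι] {u d : n → ℝ} (hu : A *ᵥ u ≤ b)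
    (hd : ∀ i, (A *ᵥ u) i = b i → (A *ᵥ d) i ≤ 0) :
    ∀ᶠ t in 𝓝[>] (0 : ℝ), A *ᵥ (u + t • d) ≤ b := by
  simp only [Pi.le_def, mulVec_add, mulVec_smul, Pi.add_apply, Pi.smul_apply, smul_eq_mul]
  refine eventually_all.mpr fun i => ?_
  rcases (hu i).eq_or_lt with hact | hlt
  · filter_upwards [self_mem_nhdsWithin] with t (ht : 0 < t)
    nlinarith [hd i hact]
  · have hlim : Tendsto (fun t : ℝ => (A *ᵥ u) i + t * (A *ᵥ d) i) (𝓝 0) (𝓝 ((A *ᵥ u) i)) :=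
      Continuous.tendsto' (by fun_prop) 0 _ (by simp)
    exact (hlim.mono_left nhdsWithin_le_nhds).eventually (ge_mem_nhds hlt)

theorem isMinOn_quadObj_of_kkt (hF : F.PosSemidef) {u : n → ℝ} {B : Finset ι}
    (hact : ∀ i : B, (A *ᵥ u) i = b i) {ν : B → ℝ} (hν : 0 ≤ ν)
    (hstat : 2 • (F *ᵥ u) + w + ∑ i : B, ν i • A i = 0) :
    IsMinOn (quadObj F w) {v | A *ᵥ v ≤ b} u := by
  intro v (hv : A *ᵥ v ≤ b)
  have hexp := quadObj_add (w := w) hF.isSymm u (v - u)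
  rw [add_sub_cancel, eq_neg_of_add_eq_zero_left hstat, neg_dotProduct, sum_dotProduct] at hexp
  have hgrad : ∑ i : B, (ν i • A i) ⬝ᵥ (v - u) ≤ 0 := Finset.sum_nonpos fun i _ => by
    have hvi : A i ⬝ᵥ v ≤ A i ⬝ᵥ u := (hv i).trans_eq (hact i).symm
    rw [smul_dotProduct, dotProduct_sub, smul_eq_mul]
    exact mul_nonpos_of_nonneg_of_nonpos (hν i) (sub_nonpos.mpr hvi)
  have hpsd := hF.dotProduct_mulVec_nonneg (v - u)
  rw [star_trivial] at hpsd
  show quadObj F w u ≤ quadObj F w v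
  linarith

theorem exists_kkt_of_isMinOn [Fintype ι] [DecidableEq ι] (hF : F.IsSymm) {u : n → ℝ}
    (hu : A *ᵥ u ≤ b) (hmin : IsMinOn (quadObj F w) {v | A *ᵥ v ≤ b} u) :
    ∃ B : Finset ι, LinearIndepOn ℝ A B ∧ (∀ i : B, (A *ᵥ u) i = b i) ∧
      ∃ ν : B → ℝ, 0 ≤ ν ∧ 2 • (F *ᵥ u) + w + ∑ i : B, ν i • A i = 0 := by
  set act := Finset.univ.filter fun i => (A *ᵥ u) i = b i
  obtain ⟨μ, hμ, hgrad⟩ := exists_nonneg_sum_smul_eq_of_dotProduct_nonneg act (fun i => -A i)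
    (2 • (F *ᵥ u) + w) fun d hd => grad_dotProduct_nonneg_of_isMinOn hF hmin <|
      eventually_mulVec_add_smul_le hu fun i hi => by
        simpa [mulVec] using hd i (Finset.mem_filter.mpr ⟨Finset.mem_univ i, hi⟩)
  obtain ⟨B, hBact, hind, ν, hν, hsum⟩ := exists_linearIndepOn_nonneg_sum_smul_eq A act μ hμ
  refine ⟨B, hind, fun i => (Finset.mem_filter.mp (hBact i.2)).2, fun i => ν i,
    fun i => hν i i.2, ?_⟩
  rw [Finset.sum_coe_sort B (fun i => ν i • A i), hgrad, ← hsum]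
  simp

end QuadraticProgram

section KKTSystem

variable {n ι : Type*} [Fintype n] {F : Matrix n n ℝ} {A : Matrix ι n ℝ} {B : Finset ι}

def kktMatrix (F : Matrix n n ℝ) (A : Matrix ι n ℝ) (B : Finset ι) :
    Matrix (n ⊕ B) (n ⊕ B) ℝ :=
  fromBlocks (2 • F) (A.submatrix Subtype.val id)ᵀ (A.submatrix Subtype.val id) 0

lemma kktMatrix_mulVec_sumElim (u : n → ℝ) (ν : B → ℝ) :
    kktMatrix F A B *ᵥ Sum.elim u ν =
      Sum.elim (2 • (F *ᵥ u) + ∑ i : B, ν i • A i) fun i : B => (A *ᵥ u) i := by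
  rw [kktMatrix, fromBlocks_mulVec, Sum.elim_comp_inl, Sum.elim_comp_inr, zero_mulVec, add_zero,
    mulVec_transpose, vecMul_eq_sum, smul_mulVec]
  rfl

lemma kktMatrix_mulVec_injective (hF : F.PosDef) (hB : LinearIndepOn ℝ A B) :
    Function.Injective (kktMatrix F A B *ᵥ ·) := by
  refine (injective_iff_map_eq_zero (kktMatrix F A B).mulVecLin).mpr fun z hz => ?_
  rw [← Sum.elim_comp_inl_inr z] at hz ⊢
  set u := z ∘ Sum.inl
  set ν := z ∘ Sum.inr
  rw [mulVecLin_apply, kktMatrix_mulVec_sumElim, ← Sum.elim_zero_zero, Sum.elim_eq_iff] at hz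
  obtain ⟨hstat, hact⟩ := hz
  have hu : u = 0 := by
    have h := congrArg (u ⬝ᵥ ·) hstat
    simp only [dotProduct_add, dotProduct_smul, dotProduct_sum, dotProduct_comm u (A _),
      show ∀ i : B, A i ⬝ᵥ u = 0 from fun i => congrFun hact i, smul_zero, sum_const_zero,
      add_zero, dotProduct_zero, smul_eq_zero, two_ne_zero, false_or] at h
    by_contra hne
    simpa [h] using hF.dotProduct_mulVec_pos hne
  rw [hu, mulVec_zero, smul_zero, zero_add] at hstat
  have hν : ν = 0 := funext (Fintype.linearIndependent_iff.mp hB ν hstat)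
  rw [hu, hν, Sum.elim_zero_zero]

variable [DecidableEq n] [DecidableEq ι]

noncomputable def kktPoint (F : Matrix n n ℝ) (A : Matrix ι n ℝ) (B : Finset ι) (w : n → ℝ)
    (b : ι → ℝ) : n ⊕ B → ℝ :=
  (kktMatrix F A B)⁻¹ *ᵥ Sum.elim (-w) fun i : B => b i

lemma sumElim_eq_kktPoint_iff (hF : F.PosDef) (hB : LinearIndepOn ℝ A B) {u w : n → ℝ}
    {ν : B → ℝ} {b : ι → ℝ} :
    Sum.elim u ν = kktPoint F A B w b ↔
      2 • (F *ᵥ u) + w + ∑ i : B, ν i • A i = 0 ∧ ∀ i : B, (A *ᵥ u) i = b i := by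
  have hinj := kktMatrix_mulVec_injective hF hB
  have hdet := (isUnit_iff_isUnit_det _).mp (mulVec_injective_iff_isUnit.mp hinj)
  rw [kktPoint, ← hinj.eq_iff, mulVec_mulVec, mul_nonsing_inv _ hdet, one_mulVec,
    kktMatrix_mulVec_sumElim, Sum.elim_eq_iff, add_right_comm, add_eq_zero_iff_eq_neg]
  exact and_congr_right' funext_iff

end KKTSystem

section ParametricQP

variable {k : ℕ} {n ι : Type*} [Fintype n] [DecidableEq n] [DecidableEq ι]
  {F : Matrix n n ℝ} {G : Matrix (Fin k) n ℝ} {A : Matrix ι n ℝ} {T : Matrix ι (Fin k) ℝ}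
  {c : ι → ℝ} {B : Finset ι}

def criticalRegion (F : Matrix n n ℝ) (G : Matrix (Fin k) n ℝ) (A : Matrix ι n ℝ)
    (T : Matrix ι (Fin k) ℝ) (c : ι → ℝ) (B : Finset ι) : Set (Fin k → ℝ) :=
  {x | A *ᵥ (kktPoint F A B (x ᵥ* G) (T *ᵥ x + c) ∘ Sum.inl) ≤ T *ᵥ x + c ∧
    0 ≤ kktPoint F A B (x ᵥ* G) (T *ᵥ x + c) ∘ Sum.inr}

variable (F G A T c B) in
lemma exists_kktPoint_eq_mulVec_add :
    ∃ (P : Matrix (n ⊕ B) (Fin k) ℝ) (p : n ⊕ B → ℝ),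
      ∀ x, kktPoint F A B (x ᵥ* G) (T *ᵥ x + c) = P *ᵥ x + p := by
  refine ⟨(kktMatrix F A B)⁻¹ * (fromRows (-Gᵀ) (T.submatrix Subtype.val id) :
    Matrix (n ⊕ B) (Fin k) ℝ),
    (kktMatrix F A B)⁻¹ *ᵥ Sum.elim 0 fun i : B => c i, fun x => ?_⟩
  rw [kktPoint, ← mulVec_mulVec, ← mulVec_add, fromRows_mulVec, neg_mulVec, mulVec_transpose]
  congr 1
  ext (j | i) <;> simp [mulVec]

variable (F G A T c B) in
lemma isPolyhedron_criticalRegion [Fintype ι] :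
    IsPolyhedron (criticalRegion F G A T c B) := by
  obtain ⟨P, p, hP⟩ := exists_kktPoint_eq_mulVec_add F G A T c B
  convert (isPolyhedron_setOf_mulVec_add_le (A * P.submatrix Sum.inl id) T
    (A *ᵥ (p ∘ Sum.inl)) c).inter
    (isPolyhedron_setOf_mulVec_add_le 0 (P.submatrix Sum.inr id) 0 (p ∘ Sum.inr)) using 1
  ext x
  have hinl : (P *ᵥ x + p) ∘ Sum.inl = P.submatrix Sum.inl id *ᵥ x + p ∘ Sum.inl := rfl
  have hinr : (P *ᵥ x + p) ∘ Sum.inr = P.submatrix Sum.inr id *ᵥ x + p ∘ Sum.inr := rfl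
  simp only [criticalRegion, hP, hinl, hinr, Set.mem_inter_iff, Set.mem_ofPred, zero_mulVec,
    add_zero, mulVec_add, mulVec_mulVec]

lemma quadArgmin_eq_of_mem_criticalRegion (hF : F.PosDef) (hB : LinearIndepOn ℝ A B)
    {x : Fin k → ℝ} (hx : x ∈ criticalRegion F G A T c B) :
    quadArgmin F (x ᵥ* G) {u | A *ᵥ u ≤ T *ᵥ x + c} =
      kktPoint F A B (x ᵥ* G) (T *ᵥ x + c) ∘ Sum.inl := by
  obtain ⟨hfeas, hν⟩ := hx
  obtain ⟨hstat, hact⟩ := (sumElim_eq_kktPoint_iff hF hB).mp (Sum.elim_comp_inl_inr _)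
  exact (eq_quadArgmin hF (convex_setOf_mulVec_le _ _) (isClosed_setOf_mulVec_le _ _) hfeas
    (isMinOn_quadObj_of_kkt hF.posSemidef hact hν hstat)).symm

lemma exists_eq_mulVec_add_on_criticalRegion (hF : F.PosDef) (hB : LinearIndepOn ℝ A B) :
    ∃ (K : Matrix n (Fin k) ℝ) (g : n → ℝ), ∀ x ∈ criticalRegion F G A T c B,
      quadArgmin F (x ᵥ* G) {u | A *ᵥ u ≤ T *ᵥ x + c} = K *ᵥ x + g := by
  obtain ⟨P, p, hP⟩ := exists_kktPoint_eq_mulVec_add F G A T c B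
  exact ⟨P.submatrix Sum.inl id, p ∘ Sum.inl, fun x hx => by
    rw [quadArgmin_eq_of_mem_criticalRegion hF hB hx, hP]; rfl⟩

lemma exists_mem_criticalRegion [Fintype ι] (hF : F.PosDef) {x : Fin k → ℝ}
    (hx : ∃ u, A *ᵥ u ≤ T *ᵥ x + c) :
    ∃ B : Finset ι, LinearIndepOn ℝ A B ∧ x ∈ criticalRegion F G A T c B := by
  obtain ⟨hmem, hmin⟩ := quadArgmin_spec (w := x ᵥ* G) hF (isClosed_setOf_mulVec_le A _) hx
  obtain ⟨B, hB, hact, ν, hν, hstat⟩ := exists_kkt_of_isMinOn hF.posSemidef.isSymm hmem hmin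
  have hkkt := (sumElim_eq_kktPoint_iff hF hB).mpr ⟨hstat, hact⟩
  refine ⟨B, hB, ?_, ?_⟩ <;> rw [← hkkt]
  · exact hmem
  · exact hν

lemma iUnion_criticalRegion [Fintype ι] (hF : F.PosDef) :
    (⋃ B : {B : Finset ι // LinearIndepOn ℝ A B}, criticalRegion F G A T c B) =
      {x | ∃ u, A *ᵥ u ≤ T *ᵥ x + c} := by
  refine subset_antisymm (Set.iUnion_subset fun B x hx => ⟨_, hx.1⟩) fun x hx => ?_
  obtain ⟨B, hB, hxB⟩ := exists_mem_criticalRegion hF hx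
  exact Set.mem_iUnion.mpr ⟨⟨B, hB⟩, hxB⟩

end ParametricQP

/-- the multi-parametric QP `min_u uᵀFu + xᵀGu s.t. C_c u ≤ T x + c_c` with
`F ≻ 0` has a unique minimizer for every feasible parameter `x`, and the minimizer map is a
continuous piecewise affine function on the feasibility region. -/
theorem mpQP_solution_continuous_pwa (nx m q : ℕ)
    (F : Matrix (Fin m) (Fin m) ℝ) (hF : F.PosDef)
    (G : Matrix (Fin nx) (Fin m) ℝ)
    (Cc : Matrix (Fin q) (Fin m) ℝ) (T : Matrix (Fin q) (Fin nx) ℝ) (cc : Fin q → ℝ) :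
    ∃ ustar : (Fin nx → ℝ) → Fin m → ℝ,
      -- unique minimizer at every feasible parameter
      (∀ x : Fin nx → ℝ, (∃ u : Fin m → ℝ, ∀ i, (Cc *ᵥ u) i ≤ (T *ᵥ x) i + cc i) →
        (∀ i, (Cc *ᵥ ustar x) i ≤ (T *ᵥ x) i + cc i) ∧
        (∀ u : Fin m → ℝ, (∀ i, (Cc *ᵥ u) i ≤ (T *ᵥ x) i + cc i) → u ≠ ustar x →
          ustar x ⬝ᵥ (F *ᵥ ustar x) + x ⬝ᵥ (G *ᵥ ustar x) <
            u ⬝ᵥ (F *ᵥ u) + x ⬝ᵥ (G *ᵥ u))) ∧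
      -- continuity on the feasibility region
      ContinuousOn ustar {x | ∃ u : Fin m → ℝ, ∀ i, (Cc *ᵥ u) i ≤ (T *ᵥ x) i + cc i} ∧
      -- piecewise affine structure on the feasibility region
      (∃ (nr : ℕ) (R : Fin nr → Set (Fin nx → ℝ))
        (K : Fin nr → Matrix (Fin m) (Fin nx) ℝ) (g : Fin nr → Fin m → ℝ),
        (∀ i, IsPolyhedron (R i)) ∧
        (∀ i j, i ≠ j → interior (R i) ∩ interior (R j) = ∅) ∧
        (⋃ i, R i) = {x | ∃ u : Fin m → ℝ, ∀ i, (Cc *ᵥ u) i ≤ (T *ᵥ x) i + cc i} ∧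
        (∀ i, ∀ x ∈ R i, ustar x = K i *ᵥ x + g i)) := by
  classical
  let ActiveSet := {B : Finset (Fin q) // LinearIndepOn ℝ Cc B}
  have hpoly (B : ActiveSet) := isPolyhedron_criticalRegion F G Cc T cc B.1
  choose K g hKg using fun B : ActiveSet =>
    exists_eq_mulVec_add_on_criticalRegion (G := G) (T := T) (c := cc) hF B.2
  have hcover := iUnion_criticalRegion (G := G) (A := Cc) (T := T) (c := cc) hF
  obtain ⟨r, P, sel, hP, hdisj, hPcover, hsub⟩ := exists_refinement_of_isPolyhedron hpoly
  refine ⟨fun x => quadArgmin F (x ᵥ* G) {u | Cc *ᵥ u ≤ T *ᵥ x + cc}, fun x hx => ?_, ?_,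
    r, P, K ∘ sel, g ∘ sel, hP, hdisj, hPcover.trans hcover, fun i x hx => hKg _ x (hsub i hx)⟩
  · obtain ⟨hmem, hmin⟩ := quadArgmin_spec hF (isClosed_setOf_mulVec_le Cc _) hx
    refine ⟨hmem, fun u hu hne => ?_⟩
    rw [dotProduct_mulVec x G, dotProduct_mulVec x G]
    exact quadObj_lt_of_isMinOn hF (convex_setOf_mulVec_le _ _) hmem hmin hu hne
  · have hcont := (locallyFinite_of_finite _).continuousOn_iUnion (fun B => (hpoly B).isClosed)
      fun B => (Continuous.continuousOn (by fun_prop)).congr (hKg B)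
    rwa [hcover] at hcont
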